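/- Let n ≥ 1, i ∈ [n], and a ∈ ℝⁿ. If a_i < max_{j ∈ [n]} a_j − log n − 1, then ∂Boltz(a)/∂a_i < 0; that is, the Boltzmann operator is strictly decreasing in the coordinate a_i on the region where a_i lies more than log n + 1 below the maximum entry. -/

import Mathlib

/-!
Differentiating the quotient `Σ aⱼ e^{aⱼ} / Σ e^{aⱼ}` gives
`∂Boltz(a)/∂aᵢ = σ(a)ᵢ · (1 + aᵢ - Boltz(a))`, so it suffices that `Boltz(a) > aᵢ + 1`.
Since `log σ(a)ⱼ = aⱼ - LSE(a)`, one has `Boltz(a) = LSE(a) - H(σ(a))`; the entropy of a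
probability vector on `n` points is at most `log n` (Jensen for `-x log x`), and
`LSE(a) ≥ max a`, hence `Boltz(a) ≥ max a - log n > aᵢ + 1`.
-/

open scoped BigOperators Classical
open Matrix

noncomputable section

def softmax {n : ℕ} (a : Fin n → ℝ) : Fin n → ℝ :=
  fun i => Real.exp (a i) / ∑ j, Real.exp (a j)

def boltz {n : ℕ} (a : Fin n → ℝ) : ℝ := ∑ i, a i * softmax a i

def argmaxSet {n : ℕ} (a : Fin n → ℝ) : Finset (Fin n) :=
  Finset.univ.filter (fun i => ∀ j, a j ≤ a i)

def hardmax {n : ℕ} (a : Fin n → ℝ) : Fin n → ℝ :=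
  fun i => if i ∈ argmaxSet a then (1 : ℝ) / (argmaxSet a).card else 0

def softmaxCols {n m : ℕ} (A : Matrix (Fin n) (Fin m) ℝ) : Matrix (Fin n) (Fin m) ℝ :=
  Matrix.of fun i k => softmax (fun j => A j k) i

def hardmaxCols {n m : ℕ} (A : Matrix (Fin n) (Fin m) ℝ) : Matrix (Fin n) (Fin m) ℝ :=
  Matrix.of fun i k => hardmax (fun j => A j k) i

def attnS {d n s : ℕ} (WO : Matrix (Fin d) (Fin s) ℝ)
    (WV WK WQ : Matrix (Fin s) (Fin d) ℝ) (Z : Matrix (Fin d) (Fin n) ℝ) :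
    Matrix (Fin d) (Fin n) ℝ :=
  Z + WO * (WV * Z) * softmaxCols ((WK * Z)ᵀ * (WQ * Z))

def attnH {d n s h : ℕ} (WO : Fin h → Matrix (Fin d) (Fin s) ℝ)
    (WV WK WQ : Fin h → Matrix (Fin s) (Fin d) ℝ) (Z : Matrix (Fin d) (Fin n) ℝ) :
    Matrix (Fin d) (Fin n) ℝ :=
  Z + ∑ i, WO i * (WV i * Z) * hardmaxCols ((WK i * Z)ᵀ * (WQ i * Z))

def l2norm {d : ℕ} (x : Fin d → ℝ) : ℝ := Real.sqrt (∑ t, (x t) ^ 2)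

def TokSep {d n N : ℕ} (rmin rmax δ : ℝ) (X : Fin N → Matrix (Fin d) (Fin n) ℝ) : Prop :=
  (∀ i k, rmin < l2norm (fun t => X i t k)) ∧
  (∀ i k, l2norm (fun t => X i t k) < rmax) ∧
  (∀ i j k l, (fun t => X i t k) ≠ (fun t => X j t l) →
    δ < l2norm (fun t => X i t k - X j t l))

def vocab {d n : ℕ} (X : Matrix (Fin d) (Fin n) ℝ) : Finset (Fin d → ℝ) :=
  Finset.image (fun k => (fun t => X t k)) Finset.univ

def ContextualMapping {d n N : ℕ} (X : Fin N → Matrix (Fin d) (Fin n) ℝ)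
    (q : Matrix (Fin d) (Fin n) ℝ → Matrix (Fin d) (Fin n) ℝ) (r δ : ℝ) : Prop :=
  (∀ i k, l2norm (fun t => q (X i) t k) < r) ∧
  (∀ i j k l, (vocab (X i) ≠ vocab (X j) ∨ (fun t => X i t k) ≠ (fun t => X j t l)) →
    δ < l2norm (fun t => q (X i) t k - q (X j) t l))

def ffn {d n q : ℕ} (W1 : Matrix (Fin q) (Fin d) ℝ) (W2 : Matrix (Fin d) (Fin q) ℝ)
    (b1 : Fin q → ℝ) (b2 : Fin d → ℝ) (H : Matrix (Fin d) (Fin n) ℝ) :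
    Matrix (Fin d) (Fin n) ℝ :=
  Matrix.of fun t k =>
    H t k + W2.mulVec (fun u => max 0 (W1.mulVec (fun t' => H t' k) u + b1 u)) t + b2 t

def logSumExp {n : ℕ} (a : Fin n → ℝ) : ℝ := Real.log (∑ i, Real.exp (a i))

def entS {n : ℕ} (p : Fin n → ℝ) : ℝ := -∑ i, p i * Real.log (p i)

open Finset Real

theorem entS_le_log_card {n : ℕ} (p : Fin n → ℝ) (hp : ∀ j, 0 ≤ p j) (hsum : ∑ j, p j = 1) :
    entS p ≤ log n := by
  have hn : (0 : ℝ) < n := Nat.cast_pos.2 <| Nat.pos_of_ne_zero <| by rintro rfl; simp at hsum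
  have := concaveOn_negMulLog.le_map_sum (t := univ) (w := fun _ => (n : ℝ)⁻¹) (p := p)
    (fun _ _ => by positivity) (by simp [hn.ne']) (fun j _ => hp j)
  simp only [smul_eq_mul, ← Finset.mul_sum, hsum, mul_one, negMulLog, neg_mul, log_inv] at this
  rw [mul_neg, neg_neg] at this
  rw [entS, ← Finset.sum_neg_distrib]
  exact le_of_mul_le_mul_left this (inv_pos.2 hn)

section Softmax

variable {n : ℕ} (a : Fin n → ℝ)

theorem boltz_eq_div : boltz a = (∑ j, a j * exp (a j)) / ∑ j, exp (a j) := by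
  simp only [boltz, softmax, mul_div_assoc, Finset.sum_div]

theorem sum_exp_pos (j : Fin n) : 0 < ∑ k, exp (a k) :=
  Finset.sum_pos (fun k _ => exp_pos (a k)) ⟨j, mem_univ j⟩

theorem softmax_pos (j : Fin n) : 0 < softmax a j :=
  div_pos (exp_pos _) (sum_exp_pos a j)

theorem sum_softmax [NeZero n] : ∑ j, softmax a j = 1 := by
  simp only [softmax, ← Finset.sum_div]
  exact div_self (sum_exp_pos a 0).ne'

theorem log_softmax (j : Fin n) : log (softmax a j) = a j - logSumExp a := by
  rw [softmax, log_div (exp_ne_zero _) (sum_exp_pos a j).ne', log_exp, logSumExp]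

theorem le_logSumExp (j : Fin n) : a j ≤ logSumExp a := by
  rw [logSumExp, le_log_iff_exp_le (sum_exp_pos a j)]
  exact single_le_sum (fun k _ => (exp_pos (a k)).le) (mem_univ j)

theorem boltz_eq_logSumExp_sub_entS [NeZero n] : boltz a = logSumExp a - entS (softmax a) := by
  have hent : entS (softmax a) = logSumExp a * ∑ j, softmax a j - boltz a := by
    simp only [entS, log_softmax, boltz, Finset.mul_sum, ← Finset.sum_sub_distrib]
    rw [← Finset.sum_neg_distrib]
    exact Finset.sum_congr rfl fun j _ => by ring
  rw [hent, sum_softmax, mul_one]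
  ring

theorem hasDerivAt_boltz_update (i : Fin n) :
    HasDerivAt (fun x => boltz (Function.update a i x))
      (softmax a i * (1 + a i - boltz a)) (a i) := by
  have hu (j : Fin n) :
      HasDerivAt (fun x => Function.update a i x j) (if j = i then 1 else 0) (a i) := by
    by_cases h : j = i
    · subst h; simp only [Function.update_self, if_true]; exact hasDerivAt_id' _
    · simpa [h] using hasDerivAt_const (a i) (a j)
  have hnum := HasDerivAt.fun_sum (u := univ) fun j _ => (hu j).fun_mul (hu j).exp
  have hden := HasDerivAt.fun_sum (u := univ) fun j _ => (hu j).exp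
  simp only [Function.update_eq_self] at hnum hden
  simp only [boltz_eq_div]
  refine (hnum.div hden (by simpa using (sum_exp_pos a i).ne')).congr_deriv ?_
  simp only [mul_ite, mul_one, mul_zero, ite_mul, zero_mul, Finset.sum_add_distrib,
    Finset.sum_ite_eq', mem_univ, if_true, softmax, Function.update_eq_self]
  have hS := (sum_exp_pos a i).ne'
  field_simp

theorem logSumExp_sub_log_card_le_boltz [NeZero n] : logSumExp a - log n ≤ boltz a := by
  have := entS_le_log_card (softmax a) (fun j => (softmax_pos a j).le) (sum_softmax a)
  rw [boltz_eq_logSumExp_sub_entS]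
  linarith

end Softmax

theorem statement11_general (n : ℕ) (i : Fin n) (a : Fin n → ℝ)
    (h : a i < Finset.univ.sup' ⟨i, Finset.mem_univ i⟩ a - Real.log n - 1) :
    deriv (fun x => boltz (Function.update a i x)) (a i) < 0 := by
  have : NeZero n := NeZero.of_pos i.pos
  obtain ⟨j, -, hj⟩ := exists_mem_eq_sup' ⟨i, mem_univ i⟩ a
  rw [hj] at h
  rw [(hasDerivAt_boltz_update a i).deriv]
  exact mul_neg_of_pos_of_neg (softmax_pos a i)
    (by linarith [le_logSumExp a j, logSumExp_sub_log_card_le_boltz a])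

theorem statement11 (n : ℕ) (hn : 1 ≤ n) (i : Fin n) (a : Fin n → ℝ)
    (h : a i < Finset.univ.sup' ⟨i, Finset.mem_univ i⟩ a - Real.log n - 1) :
    deriv (fun x => boltz (Function.update a i x)) (a i) < 0 :=
  statement11_general n i a h

end
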